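/- Let $(A_I)_{I \in \mathbb{Z}_{\ge 0}^2}$ be a doubly-indexed real sequence and $(b_i)_{i \ge 0}$ a real sequence. With $\Delta^0 b = b$, $\Delta^1 b_i = b_i - b_{i+1}$, $\Delta^2 b_i = \Delta^1 b_i - \Delta^1 b_{i+1}$, and the iterated sums $A^{(r_1+1, r_2+1)}$ defined by applying, in each coordinate $j$: a single sum $\sum_{i_j=0}^{\kappa_j}$ if $r_j = 0$; a double sum $\sum_{t_j=0}^{\kappa_j}\sum_{i_j=0}^{t_j}$ if $r_j = 1$; and $(\Delta^2 b_{\kappa_j})^{-1} \sum_{\alpha_j=0}^{\kappa_j} \Delta^2 b_{\alpha_j} \sum_{t_j=0}^{\alpha_j} \sum_{i_j=0}^{t_j}$ if $r_j = 2$ (assuming $\Delta^2 b_{\kappa_j} \ne 0$), the identity holds for all $n_1, n_2 \ge 2$: $\sum_{i_1=0}^{n_1}\sum_{i_2=0}^{n_2} A_{i_1,i_2} b_{i_1} b_{i_2} = \sum_{r_1=0}^{2}\sum_{r_2=0}^{2} \Delta^{r_1} b_{n_1-r_1} \Delta^{r_2} b_{n_2-r_2} \, A^{(r_1+1, r_2+1)}_{n_1-r_1,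 n_2-r_2}$. -/

import Mathlib

open Finset

/-- Second difference `Δ² b`. -/
def D2 (b : ℕ → ℝ) (i : ℕ) : ℝ := b i - 2 * b (i + 1) + b (i + 2)

/-- `Δ^r b` for `r = 0, 1, 2`. -/
def Dr (b : ℕ → ℝ) (r i : ℕ) : ℝ :=
  match r with
  | 0 => b i
  | 1 => b i - b (i + 1)
  | _ => D2 b i

/-- The one-coordinate iterated-sum transform `A ↦ A^{(r+1)}`. -/
noncomputable def iterSum (b : ℕ → ℝ) (r : ℕ) (f : ℕ → ℝ) (κ : ℕ) : ℝ :=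
  match r with
  | 0 => ∑ i ∈ range (κ + 1), f i
  | 1 => ∑ t ∈ range (κ + 1), ∑ i ∈ range (t + 1), f i
  | _ => (D2 b κ)⁻¹ *
      ∑ α ∈ range (κ + 1), D2 b α * ∑ t ∈ range (α + 1), ∑ i ∈ range (t + 1), f i

/-- The two-coordinate iterated sum `A^{(r₁+1, r₂+1)}_{κ₁, κ₂}`. -/
noncomputable def iterSum2 (b : ℕ → ℝ) (r1 r2 : ℕ) (A : ℕ → ℕ → ℝ) (κ1 κ2 : ℕ) : ℝ :=
  iterSum b r2 (fun i2 => iterSum b r1 (fun i1 => A i1 i2) κ1) κ2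

/-! Two Abel summations in one variable express `∑ f i * b i` through `Δ^r b` at the end of the
range and the iterated partial sums of `f`; the factor `(Δ² b κ)⁻¹` built into `A^{(3)}` is then
cancelled by `hb`. Each `A ↦ A^{(r+1)}` is linear, so the one-variable identity in `i₁`, applied
to `i₁ ↦ ∑ i₂, A i₁ i₂ * b i₂`, commutes with the sum over `i₂`, and a second application in `i₂`
gives the two-variable identity. -/

theorem double_abel_summation (f b : ℕ → ℝ) (m : ℕ) :
    ∑ i ∈ range (m + 3), f i * b i =
      b (m + 2) * ∑ i ∈ range (m + 3), f i
      + (b (m + 1) - b (m + 2)) * ∑ t ∈ range (m + 2), ∑ i ∈ range (t + 1), f i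
      + ∑ α ∈ range (m + 1), D2 b α * ∑ t ∈ range (α + 1), ∑ i ∈ range (t + 1), f i := by
  induction m with
  | zero => simp only [sum_range_succ, sum_range_zero, D2]; ring
  | succ m ih =>
    rw [show m + 1 + 3 = m + 3 + 1 by omega, show m + 1 + 2 = m + 2 + 1 by omega,
      sum_range_succ (fun i => f i * b i), ih, sum_range_succ f (m + 3),
      sum_range_succ (fun t => ∑ i ∈ range (t + 1), f i) (m + 2),
      sum_range_succ (fun α => D2 b α * ∑ t ∈ range (α + 1), ∑ i ∈ range (t + 1), f i) (m + 1)]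
    simp only [D2]
    ring

theorem sum_mul_eq_sum_Dr_mul_iterSum (f b : ℕ → ℝ) {n : ℕ} (hn : 2 ≤ n)
    (hb : D2 b (n - 2) ≠ 0) :
    ∑ i ∈ range (n + 1), f i * b i = ∑ r ∈ range 3, Dr b r (n - r) * iterSum b r f (n - r) := by
  obtain ⟨m, rfl⟩ : ∃ m, n = m + 2 := ⟨n - 2, by omega⟩
  rw [Nat.add_sub_cancel] at hb
  rw [sum_range_succ _ 2, sum_range_succ _ 1, sum_range_one]
  simp only [Dr, iterSum, Nat.add_sub_cancel, Nat.sub_zero, show m + 2 - 1 = m + 1 by omega,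
    mul_inv_cancel_left₀ hb, double_abel_summation]

theorem iterSum_sum (b : ℕ → ℝ) (r : ℕ) (s : Finset ℕ) (F : ℕ → ℕ → ℝ) (κ : ℕ) :
    iterSum b r (fun i => ∑ j ∈ s, F j i) κ = ∑ j ∈ s, iterSum b r (F j) κ := by
  rcases r with _ | _ | r <;> simp only [iterSum, sum_comm (s := range (_ + 1)) (t := s), mul_sum]

theorem iterSum_mul_const (b : ℕ → ℝ) (r : ℕ) (f : ℕ → ℝ) (c : ℝ) (κ : ℕ) :
    iterSum b r (fun i => f i * c) κ = iterSum b r f κ * c := by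
  rcases r with _ | _ | r <;> simp only [iterSum, ← sum_mul, ← mul_assoc]

/-- Proposition 1 of the paper for `ν = 2`: the two-dimensional double-Abel-transformation
identity. -/
theorem stmt17 (A : ℕ → ℕ → ℝ) (b : ℕ → ℝ) (n1 n2 : ℕ) (hn1 : 2 ≤ n1) (hn2 : 2 ≤ n2)
    (hb1 : D2 b (n1 - 2) ≠ 0) (hb2 : D2 b (n2 - 2) ≠ 0) :
    ∑ i1 ∈ range (n1 + 1), ∑ i2 ∈ range (n2 + 1), A i1 i2 * b i1 * b i2 =
      ∑ r1 ∈ range 3, ∑ r2 ∈ range 3,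
        Dr b r1 (n1 - r1) * Dr b r2 (n2 - r2) * iterSum2 b r1 r2 A (n1 - r1) (n2 - r2) := by
  have inner : ∀ i1, ∑ i2 ∈ range (n2 + 1), A i1 i2 * b i1 * b i2
      = (∑ i2 ∈ range (n2 + 1), A i1 i2 * b i2) * b i1 := fun i1 => by
    rw [sum_mul]; exact sum_congr rfl fun _ _ => by ring
  simp only [inner]
  rw [sum_mul_eq_sum_Dr_mul_iterSum _ b hn1 hb1]
  refine sum_congr rfl fun r1 _ => ?_
  simp only [iterSum_sum, iterSum_mul_const]
  rw [sum_mul_eq_sum_Dr_mul_iterSum _ b hn2 hb2, mul_sum]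
  refine sum_congr rfl fun r2 _ => ?_
  rw [iterSum2]
  ring
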